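/- arXiv:2405.03198 — 2 statements merged into one kernel-verified Lean document; each statement's English description precedes it below -/
import Mathlib

section
/- Let g₁, ..., g_n be real numbers and θ₂ > 0. The function α ↦ α + θ₂ − (θ₂/n)·Σ_{i=1}^n ((g_i + α)/(2θ₂) + 1)₊² is concave in α, and α* maximizes it if and only if (1/n)·Σ_{i=1}^n ((g_i + α*)/(2θ₂) + 1)₊ = 1. -/
/-- Subgradient inequality for `x ↦ max x 0 ^ 2`. -/
lemma m_lb (s t : ℝ) : max s 0 ^ 2 + 2 * max s 0 * (t - s) ≤ max t 0 ^ 2 := by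
  rcases le_total s 0 with hs | hs
  · rw [max_eq_right hs]
    nlinarith [sq_nonneg (max t 0)]
  · rw [max_eq_left hs]
    rcases le_total t 0 with ht | ht
    · rw [max_eq_right ht]
      nlinarith [mul_nonneg hs (neg_nonneg.mpr ht)]
    · rw [max_eq_left ht]
      nlinarith [sq_nonneg (t - s)]

/-- Upper quadratic bound for `x ↦ max x 0 ^ 2`. -/
lemma m_ub (s t : ℝ) : max t 0 ^ 2 ≤ max s 0 ^ 2 + 2 * max s 0 * (t - s) + (t - s) ^ 2 := by
  rcases le_total s 0 with hs | hs
  · rw [max_eq_right hs]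
    rcases le_total t 0 with ht | ht
    · rw [max_eq_right ht]; nlinarith [sq_nonneg (t - s)]
    · rw [max_eq_left ht]
      nlinarith [mul_nonneg (neg_nonneg.mpr hs) ht]
  · rw [max_eq_left hs]
    rcases le_total t 0 with ht | ht
    · rw [max_eq_right ht]
      nlinarith [sq_nonneg t]
    · rw [max_eq_left ht]
      nlinarith

/-- The χ²-dual objective `α ↦ α + θ₂ − (θ₂/n)·Σᵢ ((gᵢ + α)/(2θ₂) + 1)₊²` is concave,
and `α*` maximizes it iff `(1/n)·Σᵢ ((gᵢ + α*)/(2θ₂) + 1)₊ = 1`. -/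
theorem chi_sq_dual_alpha_characterization
    (n : ℕ) (hn : 0 < n) (g : Fin n → ℝ) (θ₂ : ℝ) (hθ₂ : 0 < θ₂) :
    ConcaveOn ℝ Set.univ
      (fun α : ℝ => α + θ₂ - (θ₂ / n) * ∑ i, max ((g i + α) / (2 * θ₂) + 1) 0 ^ 2) ∧
    ∀ αstar : ℝ,
      ((∀ α : ℝ,
          α + θ₂ - (θ₂ / n) * ∑ i, max ((g i + α) / (2 * θ₂) + 1) 0 ^ 2 ≤
          αstar + θ₂ - (θ₂ / n) * ∑ i, max ((g i + αstar) / (2 * θ₂) + 1) 0 ^ 2) ↔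
        (1 / n : ℝ) * ∑ i, max ((g i + αstar) / (2 * θ₂) + 1) 0 = 1) := by
  have hN : (0 : ℝ) < (n : ℝ) := Nat.cast_pos.mpr hn
  -- sum lower bound
  have hsumlb : ∀ α β : ℝ,
      (∑ i, max ((g i + α) / (2 * θ₂) + 1) 0 ^ 2) +
        ((β - α) / θ₂) * ∑ i, max ((g i + α) / (2 * θ₂) + 1) 0 ≤
      ∑ i, max ((g i + β) / (2 * θ₂) + 1) 0 ^ 2 := by
    intro α β
    have h1 : ∑ i, (max ((g i + α) / (2 * θ₂) + 1) 0 ^ 2 +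
        ((β - α) / θ₂) * max ((g i + α) / (2 * θ₂) + 1) 0) ≤
        ∑ i, max ((g i + β) / (2 * θ₂) + 1) 0 ^ 2 := by
      apply Finset.sum_le_sum
      intro i _
      have h := m_lb ((g i + α) / (2 * θ₂) + 1) ((g i + β) / (2 * θ₂) + 1)
      have hd : ((g i + β) / (2 * θ₂) + 1) - ((g i + α) / (2 * θ₂) + 1) = (β - α) / (2 * θ₂) := by
        field_simp; ring
      rw [hd] at h
      have heq : 2 * max ((g i + α) / (2 * θ₂) + 1) 0 * ((β - α) / (2 * θ₂)) =
          ((β - α) / θ₂) * max ((g i + α) / (2 * θ₂) + 1) 0 := by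
        field_simp
      linarith [h, heq]
    rwa [Finset.sum_add_distrib, ← Finset.mul_sum] at h1
  -- sum upper bound
  have hsumub : ∀ α β : ℝ,
      (∑ i, max ((g i + β) / (2 * θ₂) + 1) 0 ^ 2) ≤
      (∑ i, max ((g i + α) / (2 * θ₂) + 1) 0 ^ 2) +
        ((β - α) / θ₂) * (∑ i, max ((g i + α) / (2 * θ₂) + 1) 0) +
        (n : ℝ) * ((β - α) / (2 * θ₂)) ^ 2 := by
    intro α β
    have h1 : ∑ i, max ((g i + β) / (2 * θ₂) + 1) 0 ^ 2 ≤
        ∑ i, (max ((g i + α) / (2 * θ₂) + 1) 0 ^ 2 +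
          ((β - α) / θ₂) * max ((g i + α) / (2 * θ₂) + 1) 0 + ((β - α) / (2 * θ₂)) ^ 2) := by
      apply Finset.sum_le_sum
      intro i _
      have h := m_ub ((g i + α) / (2 * θ₂) + 1) ((g i + β) / (2 * θ₂) + 1)
      have hd : ((g i + β) / (2 * θ₂) + 1) - ((g i + α) / (2 * θ₂) + 1) = (β - α) / (2 * θ₂) := by
        field_simp; ring
      rw [hd] at h
      have heq : 2 * max ((g i + α) / (2 * θ₂) + 1) 0 * ((β - α) / (2 * θ₂)) =
          ((β - α) / θ₂) * max ((g i + α) / (2 * θ₂) + 1) 0 := by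
        field_simp
      linarith [h, heq]
    calc ∑ i, max ((g i + β) / (2 * θ₂) + 1) 0 ^ 2 ≤ _ := h1
      _ = _ := by
        rw [Finset.sum_add_distrib, Finset.sum_add_distrib, ← Finset.mul_sum,
          Finset.sum_const, Finset.card_univ, Fintype.card_fin, nsmul_eq_mul]
  -- key upper bound : F β ≤ F α + D(α) (β - α)
  have key : ∀ α β : ℝ,
      β + θ₂ - (θ₂ / n) * ∑ i, max ((g i + β) / (2 * θ₂) + 1) 0 ^ 2 ≤
      (α + θ₂ - (θ₂ / n) * ∑ i, max ((g i + α) / (2 * θ₂) + 1) 0 ^ 2) +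
        (1 - (1 / n : ℝ) * ∑ i, max ((g i + α) / (2 * θ₂) + 1) 0) * (β - α) := by
    intro α β
    set Sa := ∑ i, max ((g i + α) / (2 * θ₂) + 1) 0 ^ 2 with hSa
    set Sb := ∑ i, max ((g i + β) / (2 * θ₂) + 1) 0 ^ 2 with hSb
    set M := ∑ i, max ((g i + α) / (2 * θ₂) + 1) 0 with hM
    have h := hsumlb α β
    rw [← hSa, ← hSb, ← hM] at h
    have hmul2 : (θ₂ / n) * Sa + (1 / n : ℝ) * (β - α) * M ≤ (θ₂ / n) * Sb := by
      calc (θ₂ / n) * Sa + (1 / n : ℝ) * (β - α) * M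
          = (θ₂ / n) * (Sa + ((β - α) / θ₂) * M) := by
            field_simp
        _ ≤ (θ₂ / n) * Sb := by
            apply mul_le_mul_of_nonneg_left h (by positivity)
    have hexp : (1 - (1 / n : ℝ) * M) * (β - α) = (β - α) - (1 / n : ℝ) * (β - α) * M := by
      ring
    rw [hexp]
    linarith [hmul2]
  -- key lower bound : F β ≥ F α + D(α)(β-α) - (β-α)²/(4θ₂)
  have key2 : ∀ α β : ℝ,
      (α + θ₂ - (θ₂ / n) * ∑ i, max ((g i + α) / (2 * θ₂) + 1) 0 ^ 2) +
        (1 - (1 / n : ℝ) * ∑ i, max ((g i + α) / (2 * θ₂) + 1) 0) * (β - α) -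
        (β - α) ^ 2 / (4 * θ₂) ≤
      β + θ₂ - (θ₂ / n) * ∑ i, max ((g i + β) / (2 * θ₂) + 1) 0 ^ 2 := by
    intro α β
    set Sa := ∑ i, max ((g i + α) / (2 * θ₂) + 1) 0 ^ 2 with hSa
    set Sb := ∑ i, max ((g i + β) / (2 * θ₂) + 1) 0 ^ 2 with hSb
    set M := ∑ i, max ((g i + α) / (2 * θ₂) + 1) 0 with hM
    have h := hsumub α β
    rw [← hSa, ← hSb, ← hM] at h
    have hmul2 : (θ₂ / n) * Sb ≤
        (θ₂ / n) * Sa + (1 / n : ℝ) * (β - α) * M + (β - α) ^ 2 / (4 * θ₂) := by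
      calc (θ₂ / n) * Sb
          ≤ (θ₂ / n) * (Sa + ((β - α) / θ₂) * M + (n : ℝ) * ((β - α) / (2 * θ₂)) ^ 2) := by
            apply mul_le_mul_of_nonneg_left h (by positivity)
        _ = (θ₂ / n) * Sa + (1 / n : ℝ) * (β - α) * M + (β - α) ^ 2 / (4 * θ₂) := by
            field_simp; ring
    have hexp : (1 - (1 / n : ℝ) * M) * (β - α) = (β - α) - (1 / n : ℝ) * (β - α) * M := by
      ring
    rw [hexp]
    linarith [hmul2]
  constructor
  · refine ⟨convex_univ, ?_⟩
    intro x _ y _ a b ha hb hab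
    simp only [smul_eq_mul]
    obtain ⟨Fz, hFz⟩ : ∃ c : ℝ, (a * x + b * y) + θ₂ -
        (θ₂ / n) * ∑ i, max ((g i + (a * x + b * y)) / (2 * θ₂) + 1) 0 ^ 2 = c := ⟨_, rfl⟩
    obtain ⟨D, hD⟩ : ∃ c : ℝ,
        1 - (1 / n : ℝ) * ∑ i, max ((g i + (a * x + b * y)) / (2 * θ₂) + 1) 0 = c := ⟨_, rfl⟩
    have h1 := key (a * x + b * y) x
    have h2 := key (a * x + b * y) y
    rw [hFz, hD] at h1 h2
    rw [hFz]
    have H1 := mul_le_mul_of_nonneg_left h1 ha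
    have H2 := mul_le_mul_of_nonneg_left h2 hb
    have hb' : b = 1 - a := by linarith
    have hcomb : a * (Fz + D * (x - (a * x + b * y))) +
        b * (Fz + D * (y - (a * x + b * y))) = Fz := by
      rw [hb']; ring
    linarith [H1, H2, hcomb]
  · intro αstar
    constructor
    · intro hmax
      by_contra hne
      set S : ℝ := (1 / n : ℝ) * ∑ i, max ((g i + αstar) / (2 * θ₂) + 1) 0 with hS
      set δ : ℝ := 2 * θ₂ * (1 - S) with hδ
      have h1mS : (1 : ℝ) - S ≠ 0 := fun h => hne (by linarith)
      have hδne : δ ≠ 0 := by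
        rw [hδ]
        exact mul_ne_zero (by positivity) h1mS
      have h := key2 αstar (αstar + δ)
      rw [← hS] at h
      have hsimp : αstar + δ - αstar = δ := by ring
      rw [hsimp] at h
      have hq : δ ^ 2 / (4 * θ₂) = θ₂ * (1 - S) ^ 2 := by
        rw [hδ]; field_simp; ring
      have hd2 : (1 - S) * δ = 2 * θ₂ * (1 - S) ^ 2 := by rw [hδ]; ring
      have hpos : (0 : ℝ) < θ₂ * (1 - S) ^ 2 := by
        apply mul_pos hθ₂ (by positivity)
      have hm := hmax (αstar + δ)
      linarith [h, hm]
    · intro hS α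
      have h := key αstar α
      rw [hS] at h
      linarith
end

section
/- The constraint θ₂·log((1/n)·Σ_{i=1}^n exp(p_i/θ₂)) ≤ t (with θ₂ > 0, p ∈ ℝ^n, t ∈ ℝ) holds if and only if there exist η ∈ ℝ₊^n such that θ₂·exp((p_i − t)/θ₂) ≤ η_i for all i and (1/n)·Σ_{i=1}^n η_i ≤ θ₂; equivalently, (η_i, θ₂, p_i − t) lies in the exponential cone K_exp for each i together with (1/n)·Σ η_i ≤ θ₂. -/
/-- The exponential cone
`K_exp = {(x₁,x₂,x₃) : x₁ ≥ x₂·exp(x₃/x₂), x₂ > 0} ∪ {(x₁,0,x₃) : x₁ ≥ 0, x₃ ≤ 0}`. -/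
def Kexp : Set (ℝ × ℝ × ℝ) :=
  {p | p.1 ≥ p.2.1 * Real.exp (p.2.2 / p.2.1) ∧ p.2.1 > 0} ∪
  {p | p.2.1 = 0 ∧ p.1 ≥ 0 ∧ p.2.2 ≤ 0}

lemma lse_key (n : ℕ) (hn : 0 < n) (p : Fin n → ℝ) (t θ₂ : ℝ) (hθ₂ : 0 < θ₂) :
    θ₂ * Real.log ((1 / n : ℝ) * ∑ i, Real.exp (p i / θ₂)) ≤ t ↔
    (1 / n : ℝ) * ∑ i, θ₂ * Real.exp ((p i - t) / θ₂) ≤ θ₂ := by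
  have hnpos : (0:ℝ) < (1 / n : ℝ) := by positivity
  have hSpos : (0:ℝ) < (1 / n : ℝ) * ∑ i, Real.exp (p i / θ₂) := by
    apply mul_pos hnpos
    apply Finset.sum_pos (fun i _ => Real.exp_pos _)
    have : Nonempty (Fin n) := Fin.pos_iff_nonempty.mp hn
    exact Finset.univ_nonempty
  rw [mul_comm θ₂, ← le_div_iff₀ hθ₂, Real.log_le_iff_le_exp hSpos]
  have hE := Real.exp_pos (t / θ₂)
  have heq : ∀ i : Fin n, θ₂ * Real.exp ((p i - t) / θ₂)
      = (θ₂ * Real.exp (-(t/θ₂))) * Real.exp (p i / θ₂) := by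
    intro i
    rw [sub_div, Real.exp_sub, Real.exp_neg]
    ring
  simp_rw [heq]
  rw [← Finset.mul_sum, show (1/n:ℝ) * ((θ₂ * Real.exp (-(t/θ₂))) * ∑ i, Real.exp (p i / θ₂))
      = θ₂ * (((1/n:ℝ) * ∑ i, Real.exp (p i / θ₂)) / Real.exp (t / θ₂)) by
        rw [Real.exp_neg]; field_simp,
    mul_le_iff_le_one_right hθ₂, div_le_one hE]

/-- Exponential-cone representation of the log-sum-exp constraint: for `θ₂ > 0`,
`θ₂·log((1/n)·Σᵢ exp(pᵢ/θ₂)) ≤ t` iff there exist `η ∈ ℝ₊ⁿ` with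
`θ₂·exp((pᵢ − t)/θ₂) ≤ ηᵢ` for all `i` and `(1/n)·Σᵢ ηᵢ ≤ θ₂`; equivalently
`(ηᵢ, θ₂, pᵢ − t) ∈ K_exp` for all `i` together with `(1/n)·Σᵢ ηᵢ ≤ θ₂`. -/
theorem logsumexp_exponential_cone_representation
    (n : ℕ) (hn : 0 < n) (p : Fin n → ℝ) (t θ₂ : ℝ) (hθ₂ : 0 < θ₂) :
    (θ₂ * Real.log ((1 / n : ℝ) * ∑ i, Real.exp (p i / θ₂)) ≤ t ↔
      ∃ η : Fin n → ℝ, (∀ i, 0 ≤ η i) ∧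
        (∀ i, θ₂ * Real.exp ((p i - t) / θ₂) ≤ η i) ∧
        (1 / n : ℝ) * ∑ i, η i ≤ θ₂) ∧
    (θ₂ * Real.log ((1 / n : ℝ) * ∑ i, Real.exp (p i / θ₂)) ≤ t ↔
      ∃ η : Fin n → ℝ, (∀ i, (η i, θ₂, p i - t) ∈ Kexp) ∧
        (1 / n : ℝ) * ∑ i, η i ≤ θ₂) := by
  have key := lse_key n hn p t θ₂ hθ₂
  have hnpos : (0:ℝ) < (1 / n : ℝ) := by positivity
  have part1 : (θ₂ * Real.log ((1 / n : ℝ) * ∑ i, Real.exp (p i / θ₂)) ≤ t ↔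
      ∃ η : Fin n → ℝ, (∀ i, 0 ≤ η i) ∧
        (∀ i, θ₂ * Real.exp ((p i - t) / θ₂) ≤ η i) ∧
        (1 / n : ℝ) * ∑ i, η i ≤ θ₂) := by
    constructor
    · intro h
      refine ⟨fun i => θ₂ * Real.exp ((p i - t) / θ₂), fun i => by positivity,
        fun i => le_refl _, key.mp h⟩
    · rintro ⟨η, _, hle, hsum⟩
      refine key.mpr (le_trans ?_ hsum)
      exact mul_le_mul_of_nonneg_left (Finset.sum_le_sum fun i _ => hle i) hnpos.le
  refine ⟨part1, ?_⟩
  rw [part1]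
  constructor
  · rintro ⟨η, hpos, hle, hsum⟩
    exact ⟨η, fun i => Or.inl ⟨hle i, hθ₂⟩, hsum⟩
  · rintro ⟨η, hmem, hsum⟩
    refine ⟨η, fun i => ?_, fun i => ?_, hsum⟩ <;>
    · rcases hmem i with ⟨h1, h2⟩ | ⟨h1, _⟩
      · first
        | exact le_trans (by positivity) h1
        | exact h1
      · exact absurd h1 hθ₂.ne'
end
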